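/- Let (X, F, μ) be a measure space, n ≥ 1, and let t : X → ℝ^n be measurable (carrier term k ≡ 0). For θ ∈ ℝ^n set Z(θ) := ∫ exp(⟨θ, t(x)⟩) dμ(x), F(θ) := log Z(θ), p_θ(x) := exp(⟨θ, t(x)⟩ - F(θ)). Suppose θ₁, θ₂ ∈ ℝ^n are such that Z(θ₁), Z(θ₂), Z(2θ₁), Z(2θ₂), Z(θ₁+θ₂) all lie in (0,∞). Then ρ(p_{θ₁}, p_{θ₂}) = exp(-J_F(2θ₁, 2θ₂)) and the Cauchy–Schwarz divergence satisfies D_CS(p_{θ₁}, p_{θ₂}) = J_F(2θ₁, 2θ₂), where J_F(θ, θ') := (F(θ)+F(θ'))/2 - F((θ+θ')/2). -/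

import Mathlib

open MeasureTheory
open scoped ENNReal

/-- Partition function of an exponential family with sufficient statistic `t` and no
carrier term. -/
noncomputable def expFamZ₀ {X : Type*} [MeasurableSpace X] (μ : Measure X) {n : ℕ}
    (t : X → Fin n → ℝ) (θ : Fin n → ℝ) : ℝ≥0∞ :=
  ∫⁻ x, ENNReal.ofReal (Real.exp (∑ i, θ i * t x i)) ∂μ

/-- Cumulant function (log-normalizer) of the exponential family with no carrier
term. -/
noncomputable def expFamF₀ {X : Type*} [MeasurableSpace X] (μ : Measure X) {n : ℕ}
    (t : X → Fin n → ℝ) (θ : Fin n → ℝ) : ℝ :=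
  Real.log (expFamZ₀ μ t θ).toReal

/-- Density of the exponential family with no carrier term. -/
noncomputable def expFamPdf₀ {X : Type*} [MeasurableSpace X] (μ : Measure X) {n : ℕ}
    (t : X → Fin n → ℝ) (θ : Fin n → ℝ) (x : X) : ℝ :=
  Real.exp ((∑ i, θ i * t x i) - expFamF₀ μ t θ)

/-- Jensen divergence of the cumulant function. -/
noncomputable def jensenF₀ {X : Type*} [MeasurableSpace X] (μ : Measure X) {n : ℕ}
    (t : X → Fin n → ℝ) (θ θ' : Fin n → ℝ) : ℝ :=
  (expFamF₀ μ t θ + expFamF₀ μ t θ') / 2 - expFamF₀ μ t (((1 : ℝ) / 2) • (θ + θ'))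

/-!
Every product of two densities of the family is again an exponential: `p_θ p_θ'` is
`exp (⟨θ + θ', t⟩ - F θ - F θ')`, so its integral is `exp (F (θ + θ') - F θ - F θ')`.
Hence `∫ p_θ² = exp (F (2θ) - 2 F θ)`, the normalizers `F θ₁`, `F θ₂` cancel in `ρ`, and
what is left is `exp (F (θ₁ + θ₂) - (F (2θ₁) + F (2θ₂)) / 2) = exp (-J_F (2θ₁, 2θ₂))`.
-/

section ExpFam

variable {X : Type*} [MeasurableSpace X] (μ : Measure X) {n : ℕ} (t : X → Fin n → ℝ)

theorem expFamZ₀_toReal_eq_exp_expFamF₀ {θ : Fin n → ℝ} (h0 : 0 < expFamZ₀ μ t θ)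
    (htop : expFamZ₀ μ t θ < ⊤) :
    (expFamZ₀ μ t θ).toReal = Real.exp (expFamF₀ μ t θ) :=
  (Real.exp_log (ENNReal.toReal_pos h0.ne' htop.ne)).symm

theorem expFamPdf₀_mul_expFamPdf₀ (θ θ' : Fin n → ℝ) (x : X) :
    expFamPdf₀ μ t θ x * expFamPdf₀ μ t θ' x =
      Real.exp ((∑ i, (θ + θ') i * t x i) - (expFamF₀ μ t θ + expFamF₀ μ t θ')) := by
  simp only [expFamPdf₀, ← Real.exp_add, Pi.add_apply, add_mul, Finset.sum_add_distrib]
  congr 1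
  ring

theorem jensenF₀_two_smul (θ θ' : Fin n → ℝ) :
    jensenF₀ μ t ((2 : ℝ) • θ) ((2 : ℝ) • θ') =
      (expFamF₀ μ t ((2 : ℝ) • θ) + expFamF₀ μ t ((2 : ℝ) • θ')) / 2 -
        expFamF₀ μ t (θ + θ') := by
  rw [jensenF₀, ← smul_add, smul_smul]
  norm_num

variable {t}

theorem integral_exp_sub_eq_expFamZ₀_toReal_mul (ht : Measurable t) (η : Fin n → ℝ) (c : ℝ) :
    ∫ x, Real.exp ((∑ i, η i * t x i) - c) ∂μ = (expFamZ₀ μ t η).toReal * Real.exp (-c) := by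
  simp_rw [sub_eq_add_neg, Real.exp_add]
  rw [integral_mul_const, integral_eq_lintegral_of_nonneg_ae
    (ae_of_all _ fun x => (Real.exp_pos _).le) (by fun_prop)]
  rfl

theorem integral_expFamPdf₀_mul (ht : Measurable t) {θ θ' : Fin n → ℝ}
    (h0 : 0 < expFamZ₀ μ t (θ + θ')) (htop : expFamZ₀ μ t (θ + θ') < ⊤) :
    ∫ x, expFamPdf₀ μ t θ x * expFamPdf₀ μ t θ' x ∂μ =
      Real.exp (expFamF₀ μ t (θ + θ') - expFamF₀ μ t θ - expFamF₀ μ t θ') := by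
  simp_rw [expFamPdf₀_mul_expFamPdf₀, integral_exp_sub_eq_expFamZ₀_toReal_mul μ ht,
    expFamZ₀_toReal_eq_exp_expFamF₀ μ t h0 htop, ← Real.exp_add]
  congr 1
  ring

theorem integral_expFamPdf₀_sq (ht : Measurable t) {θ : Fin n → ℝ}
    (h0 : 0 < expFamZ₀ μ t ((2 : ℝ) • θ)) (htop : expFamZ₀ μ t ((2 : ℝ) • θ) < ⊤) :
    ∫ x, expFamPdf₀ μ t θ x ^ 2 ∂μ =
      Real.exp (expFamF₀ μ t ((2 : ℝ) • θ) - 2 * expFamF₀ μ t θ) := by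
  rw [two_smul] at h0 htop ⊢
  simp_rw [sq, integral_expFamPdf₀_mul μ ht h0 htop]
  congr 1
  ring

end ExpFam

theorem onicescuCorrelation_cauchySchwarz_expFam_noCarrier_general {X : Type*}
    [MeasurableSpace X] (μ : Measure X) {n : ℕ}
    (t : X → Fin n → ℝ) (ht : Measurable t) (θ₁ θ₂ : Fin n → ℝ)
    (hZ11 : 0 < expFamZ₀ μ t ((2 : ℝ) • θ₁)) (hZ11' : expFamZ₀ μ t ((2 : ℝ) • θ₁) < ⊤)
    (hZ22 : 0 < expFamZ₀ μ t ((2 : ℝ) • θ₂)) (hZ22' : expFamZ₀ μ t ((2 : ℝ) • θ₂) < ⊤)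
    (hZ12 : 0 < expFamZ₀ μ t (θ₁ + θ₂)) (hZ12' : expFamZ₀ μ t (θ₁ + θ₂) < ⊤) :
    (∫ x, expFamPdf₀ μ t θ₁ x * expFamPdf₀ μ t θ₂ x ∂μ) /
        Real.sqrt ((∫ x, (expFamPdf₀ μ t θ₁ x) ^ 2 ∂μ) *
          (∫ x, (expFamPdf₀ μ t θ₂ x) ^ 2 ∂μ))
      = Real.exp (-(jensenF₀ μ t ((2 : ℝ) • θ₁) ((2 : ℝ) • θ₂))) ∧
    -Real.log ((∫ x, expFamPdf₀ μ t θ₁ x * expFamPdf₀ μ t θ₂ x ∂μ) /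
        Real.sqrt ((∫ x, (expFamPdf₀ μ t θ₁ x) ^ 2 ∂μ) *
          (∫ x, (expFamPdf₀ μ t θ₂ x) ^ 2 ∂μ)))
      = jensenF₀ μ t ((2 : ℝ) • θ₁) ((2 : ℝ) • θ₂) := by
  have hρ : (∫ x, expFamPdf₀ μ t θ₁ x * expFamPdf₀ μ t θ₂ x ∂μ) /
        Real.sqrt ((∫ x, (expFamPdf₀ μ t θ₁ x) ^ 2 ∂μ) *
          (∫ x, (expFamPdf₀ μ t θ₂ x) ^ 2 ∂μ))
      = Real.exp (-(jensenF₀ μ t ((2 : ℝ) • θ₁) ((2 : ℝ) • θ₂))) := by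
    rw [integral_expFamPdf₀_mul μ ht hZ12 hZ12', integral_expFamPdf₀_sq μ ht hZ11 hZ11',
      integral_expFamPdf₀_sq μ ht hZ22 hZ22', ← Real.exp_add, ← Real.exp_half,
      ← Real.exp_sub, jensenF₀_two_smul]
    congr 1
    ring
  exact ⟨hρ, by rw [hρ, Real.log_exp, neg_neg]⟩

/-- With no carrier term, Onicescu's correlation coefficient is `exp (-J_F(2θ₁,2θ₂))`
and the Cauchy–Schwarz divergence is the Jensen divergence `J_F(2θ₁,2θ₂)`. -/
theorem onicescuCorrelation_cauchySchwarz_expFam_noCarrier {X : Type*}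
    [MeasurableSpace X] (μ : Measure X) {n : ℕ} (hn : 1 ≤ n)
    (t : X → Fin n → ℝ) (ht : Measurable t) (θ₁ θ₂ : Fin n → ℝ)
    (hZ1 : 0 < expFamZ₀ μ t θ₁) (hZ1' : expFamZ₀ μ t θ₁ < ⊤)
    (hZ2 : 0 < expFamZ₀ μ t θ₂) (hZ2' : expFamZ₀ μ t θ₂ < ⊤)
    (hZ11 : 0 < expFamZ₀ μ t ((2 : ℝ) • θ₁)) (hZ11' : expFamZ₀ μ t ((2 : ℝ) • θ₁) < ⊤)
    (hZ22 : 0 < expFamZ₀ μ t ((2 : ℝ) • θ₂)) (hZ22' : expFamZ₀ μ t ((2 : ℝ) • θ₂) < ⊤)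
    (hZ12 : 0 < expFamZ₀ μ t (θ₁ + θ₂)) (hZ12' : expFamZ₀ μ t (θ₁ + θ₂) < ⊤) :
    (∫ x, expFamPdf₀ μ t θ₁ x * expFamPdf₀ μ t θ₂ x ∂μ) /
        Real.sqrt ((∫ x, (expFamPdf₀ μ t θ₁ x) ^ 2 ∂μ) *
          (∫ x, (expFamPdf₀ μ t θ₂ x) ^ 2 ∂μ))
      = Real.exp (-(jensenF₀ μ t ((2 : ℝ) • θ₁) ((2 : ℝ) • θ₂))) ∧
    -Real.log ((∫ x, expFamPdf₀ μ t θ₁ x * expFamPdf₀ μ t θ₂ x ∂μ) /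
        Real.sqrt ((∫ x, (expFamPdf₀ μ t θ₁ x) ^ 2 ∂μ) *
          (∫ x, (expFamPdf₀ μ t θ₂ x) ^ 2 ∂μ)))
      = jensenF₀ μ t ((2 : ℝ) • θ₁) ((2 : ℝ) • θ₂) :=
  onicescuCorrelation_cauchySchwarz_expFam_noCarrier_general μ t ht θ₁ θ₂ hZ11 hZ11' hZ22 hZ22' hZ12
    hZ12'
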